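/- arXiv:2306.04936 — 7 statements merged into one kernel-verified Lean document; each statement's English description precedes it below -/
import Mathlib

section
/- For the until formula φ = φ₁ U_I φ₂ with θ_φ(x,t) = sup_{t' ∈ t+I} min(θ_{φ₂}(x,t'), inf_{t'' ∈ [t,t')} θ_{φ₁}(x,t'')) and the analogous definition of χ_φ via sup/inf of the χ's of the subformulas: if soundness holds for φ₁ and φ₂ at all times, then soundness holds for φ₁ U_I φ₂, assuming I is a nonempty finite interval of ℕ. -/
/-- `min (f₂ t') (inf_{t'' ∈ [t, t')} f₁ t'')`, with the empty infimum giving `f₂ t'`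
(equivalently, empty min = +1 for values in {-1,+1}). -/
def untilInner (f₁ f₂ : ℕ → ℤ) (t t' : ℕ) : ℤ :=
  (Finset.Ico t t').fold min (f₂ t') f₁

/-- `sup_{t' ∈ t + [a,b]} min (f₂ t') (inf_{t'' ∈ [t,t')} f₁ t'')`. -/
def untilVal (f₁ f₂ : ℕ → ℤ) (a b t : ℕ) : ℤ :=
  (Finset.Icc a b).fold max (untilInner f₁ f₂ t (t + a)) (fun τ => untilInner f₁ f₂ t (t + τ))

theorem soundness_until (θ₁ θ₂ χ₁ χ₂ : ℕ → ℤ) (a b : ℕ) (hab : a ≤ b)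
    (hval₁ : ∀ t : ℕ, χ₁ t = 1 ∨ χ₁ t = -1)
    (hval₂ : ∀ t : ℕ, χ₂ t = 1 ∨ χ₂ t = -1)
    (hs₁ : ∀ t : ℕ, (θ₁ t > 0 → χ₁ t = 1) ∧ (θ₁ t < 0 → χ₁ t = -1))
    (hs₂ : ∀ t : ℕ, (θ₂ t > 0 → χ₂ t = 1) ∧ (θ₂ t < 0 → χ₂ t = -1)) :
    ∀ t : ℕ,
      (untilVal θ₁ θ₂ a b t > 0 → untilVal χ₁ χ₂ a b t = 1) ∧
      (untilVal θ₁ θ₂ a b t < 0 → untilVal χ₁ χ₂ a b t = -1) := by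
  intro t
  have hχ1_le : ∀ s, χ₁ s ≤ 1 := fun s => by rcases hval₁ s with h | h <;> omega
  have hχ1_ge : ∀ s, -1 ≤ χ₁ s := fun s => by rcases hval₁ s with h | h <;> omega
  have hχ2_le : ∀ s, χ₂ s ≤ 1 := fun s => by rcases hval₂ s with h | h <;> omega
  have hχ2_ge : ∀ s, -1 ≤ χ₂ s := fun s => by rcases hval₂ s with h | h <;> omega
  -- bounds on inner χ values
  have hinner_le : ∀ t', untilInner χ₁ χ₂ t t' ≤ 1 := fun t' =>
    (Finset.fold_min_le _).mpr (Or.inl (hχ2_le t'))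
  have hinner_ge : ∀ t', -1 ≤ untilInner χ₁ χ₂ t t' := fun t' =>
    (Finset.le_fold_min _).mpr ⟨hχ2_ge t', fun x _ => hχ1_ge x⟩
  constructor
  · intro hpos
    -- θ val > 0 means init > 0 or some member > 0; init corresponds to τ = a
    have h1 : (1 : ℤ) ≤ untilVal θ₁ θ₂ a b t := hpos
    rw [untilVal, Finset.le_fold_max] at h1
    have hex : ∃ τ ∈ Finset.Icc a b, 1 ≤ untilInner θ₁ θ₂ t (t + τ) := by
      rcases h1 with h | ⟨τ, hτ, h⟩
      · exact ⟨a, Finset.mem_Icc.mpr ⟨le_refl a, hab⟩, h⟩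
      · exact ⟨τ, hτ, h⟩
    obtain ⟨τ, hτ, hinner⟩ := hex
    rw [untilInner, Finset.le_fold_min] at hinner
    obtain ⟨h2, h1'⟩ := hinner
    have hχ2 : χ₂ (t + τ) = 1 := (hs₂ (t + τ)).1 (by omega)
    have hχinner : (1 : ℤ) ≤ untilInner χ₁ χ₂ t (t + τ) := by
      rw [untilInner, Finset.le_fold_min]
      exact ⟨by omega, fun x hx => by
        have := (hs₁ x).1 (by have := h1' x hx; omega); omega⟩
    have hle : untilVal χ₁ χ₂ a b t ≤ 1 := by
      rw [untilVal, Finset.fold_max_le]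
      exact ⟨hinner_le _, fun x _ => hinner_le _⟩
    have hge : (1 : ℤ) ≤ untilVal χ₁ χ₂ a b t := by
      rw [untilVal, Finset.le_fold_max]
      exact Or.inr ⟨τ, hτ, hχinner⟩
    omega
  · intro hneg
    have h1 : untilVal θ₁ θ₂ a b t ≤ -1 := by omega
    rw [untilVal, Finset.fold_max_le] at h1
    obtain ⟨hinit, hall⟩ := h1
    -- each inner χ is ≤ -1
    have key : ∀ τ, untilInner θ₁ θ₂ t (t + τ) ≤ -1 →
        untilInner χ₁ χ₂ t (t + τ) ≤ -1 := by
      intro τ h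
      rw [untilInner, Finset.fold_min_le] at h ⊢
      rcases h with h | ⟨x, hx, h⟩
      · exact Or.inl (by have := (hs₂ (t + τ)).2 (by omega); omega)
      · exact Or.inr ⟨x, hx, by have := (hs₁ x).2 (by omega); omega⟩
    have hle : untilVal χ₁ χ₂ a b t ≤ -1 := by
      rw [untilVal, Finset.fold_max_le]
      exact ⟨key a hinit, fun x hx => key x (hall x hx)⟩
    have hge : (-1 : ℤ) ≤ untilVal χ₁ χ₂ a b t := by
      rw [untilVal, Finset.le_fold_max]
      exact Or.inl (hinner_ge _)
    omega
end

section
/- Let φ = p₁ ∨ p₂ be a disjunction of two predicates, with θ_{p₁∨p₂}(x,t) := max(θ_{p₁}(x,t), θ_{p₂}(x,t)) and χ_{p₁∨p₂}(x,t) := max(χ_{p₁}(x,t), χ_{p₂}(x,t)). For any shifts τ₁, τ₂ ∈ ℤ with max(|τ₁|,|τ₂|) ≤ |θ_{p₁∨p₂}(x,t)|, the asynchronously shifted signal x_τ̄ (defined by χ_{p_k}(x_τ̄, s) = χ_{p_k}(x, s + τ_k) for k = 1,2) satisfies χ_{p₁∨p₂}(x_τ̄, t) = χ_{p₁∨p₂}(x,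 t). -/
def symSet (χ : ℤ → ℤ) (t : ℤ) : Set ℕ :=
  {τ | ∀ s : ℤ, |s - t| ≤ (τ : ℤ) → χ s = χ t}

noncomputable def thetaSym (χ : ℤ → ℤ) (t : ℤ) : ℤ :=
  χ t * ((sSup (symSet χ t) : ℕ) : ℤ)

theorem disjunction_async_shift (χ₁ χ₂ : ℤ → ℤ) (t τ₁ τ₂ : ℤ)
    (hval₁ : ∀ s : ℤ, χ₁ s = 1 ∨ χ₁ s = -1)
    (hval₂ : ∀ s : ℤ, χ₂ s = 1 ∨ χ₂ s = -1)
    (hfin₁ : BddAbove (symSet χ₁ t))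
    (hfin₂ : BddAbove (symSet χ₂ t))
    (hτ : max |τ₁| |τ₂| ≤ |max (thetaSym χ₁ t) (thetaSym χ₂ t)|) :
    max (χ₁ (t + τ₁)) (χ₂ (t + τ₂)) = max (χ₁ t) (χ₂ t) := by
  have key : ∀ (χ : ℤ → ℤ), BddAbove (symSet χ t) → ∀ τ : ℤ,
      |τ| ≤ ((sSup (symSet χ t) : ℕ) : ℤ) → χ (t + τ) = χ t := by
    intro χ hb τ hτ'
    have hne : (symSet χ t).Nonempty := by
      refine ⟨0, fun s hs => ?_⟩
      have h1 := abs_le.mp hs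
      have hst : s = t := by omega
      rw [hst]
    have hmem := Nat.sSup_mem hne hb
    exact hmem (t + τ) (by simpa using hτ')
  have h1 := key χ₁ hfin₁ τ₁
  have h2 := key χ₂ hfin₂ τ₂
  have hR₁0 : (0:ℤ) ≤ ((sSup (symSet χ₁ t) : ℕ) : ℤ) := Int.natCast_nonneg _
  have hR₂0 : (0:ℤ) ≤ ((sSup (symSet χ₂ t) : ℕ) : ℤ) := Int.natCast_nonneg _
  have hb1 := hval₁ (t + τ₁)
  have hb2 := hval₂ (t + τ₂)
  unfold thetaSym at hτ
  rcases hval₁ t with e1 | e1 <;> rcases hval₂ t with e2 | e2 <;>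
    rw [e1, e2] at hτ ⊢ <;>
    simp only [one_mul, neg_one_mul] at hτ
  · -- χ₁ t = 1, χ₂ t = 1
    rcases le_total ((sSup (symSet χ₁ t) : ℕ) : ℤ) ((sSup (symSet χ₂ t) : ℕ) : ℤ) with hc | hc
    · have hM : |max ((sSup (symSet χ₁ t) : ℕ) : ℤ) ((sSup (symSet χ₂ t) : ℕ) : ℤ)|
          = ((sSup (symSet χ₂ t) : ℕ) : ℤ) := by
        rw [max_eq_right hc]; exact abs_of_nonneg hR₂0
      have := h2 (by omega)
      rw [this, e2]
      omega
    · have hM : |max ((sSup (symSet χ₁ t) : ℕ) : ℤ) ((sSup (symSet χ₂ t) : ℕ) : ℤ)|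
          = ((sSup (symSet χ₁ t) : ℕ) : ℤ) := by
        rw [max_eq_left hc]; exact abs_of_nonneg hR₁0
      have := h1 (by omega)
      rw [this, e1]
      omega
  · -- χ₁ t = 1, χ₂ t = -1
    have hM : |max ((sSup (symSet χ₁ t) : ℕ) : ℤ) (-((sSup (symSet χ₂ t) : ℕ) : ℤ))|
        = ((sSup (symSet χ₁ t) : ℕ) : ℤ) := by
      rw [max_eq_left (by omega)]; exact abs_of_nonneg hR₁0
    have := h1 (by omega)
    rw [this, e1]
    omega
  · -- χ₁ t = -1, χ₂ t = 1
    have hM : |max (-((sSup (symSet χ₁ t) : ℕ) : ℤ)) ((sSup (symSet χ₂ t) : ℕ) : ℤ)|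
        = ((sSup (symSet χ₂ t) : ℕ) : ℤ) := by
      rw [max_eq_right (by omega)]; exact abs_of_nonneg hR₂0
    have := h2 (by omega)
    rw [this, e2]
    omega
  · -- both -1
    rcases le_total ((sSup (symSet χ₁ t) : ℕ) : ℤ) ((sSup (symSet χ₂ t) : ℕ) : ℤ) with hc | hc
    · have hM : |max (-((sSup (symSet χ₁ t) : ℕ) : ℤ)) (-((sSup (symSet χ₂ t) : ℕ) : ℤ))|
          = ((sSup (symSet χ₁ t) : ℕ) : ℤ) := by
        rw [max_eq_left (by omega)]; rw [abs_neg]; exact abs_of_nonneg hR₁0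
      rw [h1 (by omega), h2 (by omega), e1, e2]
    · have hM : |max (-((sSup (symSet χ₁ t) : ℕ) : ℤ)) (-((sSup (symSet χ₂ t) : ℕ) : ℤ))|
          = ((sSup (symSet χ₂ t) : ℕ) : ℤ) := by
        rw [max_eq_right (by omega)]; rw [abs_neg]; exact abs_of_nonneg hR₂0
      rw [h1 (by omega), h2 (by omega), e1, e2]
end

section
/- Let φ = p₁ ∧ p₂ be a conjunction of two predicates, with θ_{p₁∧p₂}(x,t) := min(θ_{p₁}(x,t), θ_{p₂}(x,t)). For any shifts τ₁, τ₂ ∈ ℤ with max(|τ₁|,|τ₂|) ≤ |θ_{p₁∧p₂}(x,t)|, the asynchronously shifted signal x_τ̄ satisfies χ_{p₁∧p₂}(x_τ̄, t) = χ_{p₁∧p₂}(x, t), where χ of a conjunction is the min of the subformula χ's. -/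
lemma key_shift (χ : ℤ → ℤ) (t τ : ℤ) (h : BddAbove (symSet χ t))
    (hτ : |τ| ≤ ((sSup (symSet χ t) : ℕ) : ℤ)) : χ (t + τ) = χ t := by
  have hne : (symSet χ t).Nonempty := ⟨0, by
    intro s hs
    have h0 : |s - t| ≤ 0 := by simpa using hs
    have : s = t := by
      have := abs_nonneg (s - t)
      have : s - t = 0 := le_antisymm_iff.mp (le_antisymm h0 this) |>.1 |> (fun _ => abs_eq_zero.mp (le_antisymm h0 this))
      omega
    rw [this]⟩
  have hmem := Nat.sSup_mem hne h
  exact hmem (t + τ) (by simpa using hτ)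

theorem conjunction_async_shift (χ₁ χ₂ : ℤ → ℤ) (t τ₁ τ₂ : ℤ)
    (hval₁ : ∀ s : ℤ, χ₁ s = 1 ∨ χ₁ s = -1)
    (hval₂ : ∀ s : ℤ, χ₂ s = 1 ∨ χ₂ s = -1)
    (hfin₁ : BddAbove (symSet χ₁ t))
    (hfin₂ : BddAbove (symSet χ₂ t))
    (hτ : max |τ₁| |τ₂| ≤ |min (thetaSym χ₁ t) (thetaSym χ₂ t)|) :
    min (χ₁ (t + τ₁)) (χ₂ (t + τ₂)) = min (χ₁ t) (χ₂ t) := by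
  set r₁ := ((sSup (symSet χ₁ t) : ℕ) : ℤ) with hr₁
  set r₂ := ((sSup (symSet χ₂ t) : ℕ) : ℤ) with hr₂
  have hr₁0 : 0 ≤ r₁ := Int.ofNat_nonneg _
  have hr₂0 : 0 ≤ r₂ := Int.ofNat_nonneg _
  have k₁ : |τ₁| ≤ r₁ → χ₁ (t + τ₁) = χ₁ t := fun h => key_shift χ₁ t τ₁ hfin₁ h
  have k₂ : |τ₂| ≤ r₂ → χ₂ (t + τ₂) = χ₂ t := fun h => key_shift χ₂ t τ₂ hfin₂ h
  rcases hval₁ t with h1 | h1 <;> rcases hval₂ t with h2 | h2 <;>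
    simp only [thetaSym, h1, h2, one_mul, neg_one_mul, ← hr₁, ← hr₂] at hτ
  · -- both 1
    rw [k₁ (by rw [abs_of_nonneg (le_min hr₁0 hr₂0)] at hτ; omega),
        k₂ (by rw [abs_of_nonneg (le_min hr₁0 hr₂0)] at hτ; omega)]
  · -- χ₁ = 1, χ₂ = -1
    have hmin : min r₁ (-r₂) = -r₂ := min_eq_right (by omega)
    rw [hmin, abs_neg, abs_of_nonneg hr₂0] at hτ
    have e₂ := k₂ (by omega)
    rcases hval₁ (t + τ₁) with e₁ | e₁ <;> rw [e₁, e₂, h1, h2] <;> norm_num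
  · -- χ₁ = -1, χ₂ = 1
    have hmin : min (-r₁) r₂ = -r₁ := min_eq_left (by omega)
    rw [hmin, abs_neg, abs_of_nonneg hr₁0] at hτ
    have e₁ := k₁ (by omega)
    rcases hval₂ (t + τ₂) with e₂ | e₂ <;> rw [e₁, e₂, h1, h2] <;> norm_num
  · -- both -1
    have hmin : min (-r₁) (-r₂) = -(max r₁ r₂) := by omega
    rw [hmin, abs_neg, abs_of_nonneg (le_trans hr₁0 (le_max_left _ _))] at hτ
    rcases le_total r₁ r₂ with hc | hc
    · have e₂ := k₂ (by omega)
      rcases hval₁ (t + τ₁) with e₁ | e₁ <;> rw [e₁, e₂, h1, h2] <;> norm_num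
    · have e₁ := k₁ (by omega)
      rcases hval₂ (t + τ₂) with e₂ | e₂ <;> rw [e₁, e₂, h1, h2] <;> norm_num
end

section
/- The temporal robustness of a predicate satisfies a 1-Lipschitz-type property in time: for all t, t' ∈ ℤ with χ_p(x,t) = χ_p(x,t'), |θ_p(x,t) - θ_p(x,t')| ≤ |t - t'|, provided both robustness values are finite. -/
lemma sSup_le_sSup_add (χ : ℤ → ℤ) (t t' : ℤ)
    (hfin : BddAbove (symSet χ t)) (hfin' : BddAbove (symSet χ t'))
    (hχ : χ t = χ t') :
    sSup (symSet χ t') ≤ sSup (symSet χ t) + (t - t').natAbs := by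
  set b := sSup (symSet χ t') with hb
  set d := (t - t').natAbs with hd
  have hne : (symSet χ t').Nonempty :=
    ⟨0, by
      intro s hs
      have : s = t' := by simp at hs; omega
      exact this ▸ rfl⟩
  have hbmem : b ∈ symSet χ t' := Nat.sSup_mem hne hfin'
  have hmem : b - d ∈ symSet χ t := by
    intro s hs
    by_cases hc : d ≤ b
    · have hcast : ((b - d : ℕ) : ℤ) = (b : ℤ) - d := by omega
      have habs : |s - t'| ≤ |s - t| + |t - t'| := by
        calc |s - t'| = |(s - t) + (t - t')| := by ring_nf
          _ ≤ |s - t| + |t - t'| := abs_add_le _ _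
      have hnat : |t - t'| = ((t - t').natAbs : ℤ) := Int.abs_eq_natAbs _
      have h1 : |s - t'| ≤ (b : ℤ) := by rw [hcast] at hs; omega
      rw [hbmem s h1, ← hχ]
    · have : (b - d : ℕ) = 0 := by omega
      rw [this] at hs
      have : s = t := by simp at hs; omega
      rw [this]
  have := le_csSup hfin hmem
  omega

theorem theta_lipschitz (χ : ℤ → ℤ) (t t' : ℤ)
    (hval : ∀ s : ℤ, χ s = 1 ∨ χ s = -1)
    (hfin : BddAbove (symSet χ t))
    (hfin' : BddAbove (symSet χ t'))
    (hχ : χ t = χ t') :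
    |thetaSym χ t - thetaSym χ t'| ≤ |t - t'| := by
  have h1 := sSup_le_sSup_add χ t t' hfin hfin' hχ
  have h2 := sSup_le_sSup_add χ t' t hfin' hfin hχ.symm
  have hχabs : |χ t| = 1 := by rcases hval t with h | h <;> simp [h]
  unfold thetaSym
  rw [← hχ, ← mul_sub, abs_mul, hχabs, one_mul]
  have hnat : |t - t'| = ((t - t').natAbs : ℤ) := Int.abs_eq_natAbs _
  have hnat' : (t' - t).natAbs = (t - t').natAbs := by omega
  rw [hnat]
  rw [abs_le]
  omega
end

section
/- For the eventually operator over predicates: let θ_{F_I p}(x,t) := max_{t' ∈ t+I} θ_p(x,t') and χ_{F_I p}(x,t) := max_{t' ∈ t+I} χ_p(x,t') where I is a nonempty finite interval of ℕ. For any τ ∈ ℤ with |τ| ≤ |θ_{F_I p}(x,t)|, it holds that χ_{F_I p}(x_τ, t) = χ_{F_I p}(x, t), where χ_p(x_τ, s) := χ_p(x, s + τ). -/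
/-- `max_{t' ∈ t + [a,b]} θ_p(x, t')`. -/
noncomputable def evTheta (χ : ℤ → ℤ) (a b : ℕ) (t : ℤ) : ℤ :=
  (Finset.Icc a b).fold max (thetaSym χ (t + (a : ℤ))) (fun k : ℕ => thetaSym χ (t + (k : ℤ)))

/-- `max_{t' ∈ t + [a,b]} χ_p(x, t')`. -/
def evChi (χ : ℤ → ℤ) (a b : ℕ) (t : ℤ) : ℤ :=
  (Finset.Icc a b).fold max (χ (t + (a : ℤ))) (fun k : ℕ => χ (t + (k : ℤ)))

lemma zero_mem_symSet (χ : ℤ → ℤ) (t : ℤ) : 0 ∈ symSet χ t := by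
  intro s hs
  have h := abs_le.mp hs
  have : s = t := by omega
  rw [this]

lemma shift_eq (χ : ℤ → ℤ) (hfin : ∀ s : ℤ, BddAbove (symSet χ s)) (s τ : ℤ)
    (h : |τ| ≤ ((sSup (symSet χ s) : ℕ) : ℤ)) : χ (s + τ) = χ s := by
  have hmem : sSup (symSet χ s) ∈ symSet χ s :=
    Nat.sSup_mem ⟨0, zero_mem_symSet χ s⟩ (hfin s)
  exact hmem (s + τ) (by simpa using h)

theorem eventually_shift (χ : ℤ → ℤ) (a b : ℕ) (hab : a ≤ b) (t τ : ℤ)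
    (hval : ∀ s : ℤ, χ s = 1 ∨ χ s = -1)
    (hfin : ∀ s : ℤ, BddAbove (symSet χ s))
    (hτ : |τ| ≤ |evTheta χ a b t|) :
    evChi (fun s => χ (s + τ)) a b t = evChi χ a b t := by
  unfold evTheta at hτ
  obtain ⟨M, hM⟩ : ∃ M : ℤ, M = (Finset.Icc a b).fold max (thetaSym χ (t + (a : ℤ))) (fun k : ℕ => thetaSym χ (t + (k : ℤ))) := ⟨_, rfl⟩
  rw [← hM] at hτ
  set r : ℕ → ℤ := fun k => ((sSup (symSet χ (t + (k : ℤ))) : ℕ) : ℤ) with hr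
  have hr0 : ∀ k, 0 ≤ r k := fun k => Int.natCast_nonneg _
  have hθeq : ∀ k : ℕ, thetaSym χ (t + (k : ℤ)) = χ (t + (k : ℤ)) * r k := fun k => rfl
  have haD : a ∈ Finset.Icc a b := Finset.mem_Icc.mpr ⟨le_refl a, hab⟩
  by_cases hτ0 : τ = 0
  · subst hτ0; simp [evChi]
  have hτ1 : 1 ≤ |τ| := Int.one_le_abs hτ0
  by_cases hex : ∃ k ∈ Finset.Icc a b, χ (t + (k : ℤ)) = 1
  · -- some point has χ = 1
    obtain ⟨k0, hk0D, hk0⟩ := hex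
    -- find witness with χ = 1 and radius ≥ |τ|
    have hwit : ∃ k ∈ Finset.Icc a b, χ (t + (k : ℤ)) = 1 ∧ |τ| ≤ r k := by
      by_contra hcon
      push_neg at hcon
      have hle : ∀ k ∈ Finset.Icc a b, thetaSym χ (t + (k : ℤ)) ≤ |τ| - 1 := by
        intro k hk
        rcases hval (t + (k : ℤ)) with h1 | h1
        · have := hcon k hk h1
          rw [hθeq k, h1, one_mul]
          omega
        · rw [hθeq k, h1, neg_one_mul]
          have := hr0 k
          omega
      have hfold : M ≤ |τ| - 1 := by
        rw [hM]; exact (Finset.fold_max_le _).mpr ⟨hle a haD, hle⟩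
      have hge : thetaSym χ (t + (k0 : ℤ)) ≤ M := by
        rw [hM]; exact (Finset.le_fold_max _).mpr (Or.inr ⟨k0, hk0D, le_refl _⟩)
      have h0 : thetaSym χ (t + (k0 : ℤ)) = r k0 := by rw [hθeq k0, hk0, one_mul]
      have hMnn : 0 ≤ M := le_trans (h0 ▸ hr0 k0) hge
      rw [abs_of_nonneg hMnn] at hτ
      omega
    obtain ⟨k, hkD, hk1, hkr⟩ := hwit
    have hshift : χ (t + (k : ℤ) + τ) = 1 := by
      rw [shift_eq χ hfin _ τ hkr]; exact hk1
    have hle1 : ∀ s : ℤ, χ s ≤ 1 := by intro s; rcases hval s with h | h <;> omega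
    have hR : evChi χ a b t = 1 := by
      unfold evChi
      refine le_antisymm ((Finset.fold_max_le _).mpr ⟨hle1 _, fun x _ => hle1 _⟩) ?_
      exact (Finset.le_fold_max _).mpr (Or.inr ⟨k, hkD, by rw [hk1]⟩)
    have hL : evChi (fun s => χ (s + τ)) a b t = 1 := by
      unfold evChi
      refine le_antisymm ((Finset.fold_max_le _).mpr ⟨hle1 _, fun x _ => hle1 _⟩) ?_
      exact (Finset.le_fold_max _).mpr (Or.inr ⟨k, hkD, by simp only; rw [hshift]⟩)
    rw [hL, hR]
  · -- all points have χ = -1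
    push_neg at hex
    have hall : ∀ k ∈ Finset.Icc a b, χ (t + (k : ℤ)) = -1 := by
      intro k hk
      rcases hval (t + (k : ℤ)) with h | h
      · exact absurd h (hex k hk)
      · exact h
    have hθle : M ≤ 0 := by
      rw [hM]
      refine (Finset.fold_max_le _).mpr ⟨?_, fun k hk => ?_⟩
      · rw [hθeq a, hall a haD, neg_one_mul]
        have := hr0 a; omega
      · rw [hθeq k, hall k hk, neg_one_mul]
        have := hr0 k; omega
    rw [abs_of_nonpos hθle] at hτ
    have hrk : ∀ k ∈ Finset.Icc a b, |τ| ≤ r k := by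
      intro k hk
      have hge : thetaSym χ (t + (k : ℤ)) ≤ M := by
        rw [hM]; exact (Finset.le_fold_max _).mpr (Or.inr ⟨k, hk, le_refl _⟩)
      have heq : thetaSym χ (t + (k : ℤ)) = -(r k) := by
        rw [hθeq k, hall k hk, neg_one_mul]
      omega
    have hshift : ∀ k ∈ Finset.Icc a b, χ (t + (k : ℤ) + τ) = -1 := by
      intro k hk
      rw [shift_eq χ hfin _ τ (hrk k hk)]; exact hall k hk
    have hL : evChi (fun s => χ (s + τ)) a b t = -1 := by
      unfold evChi
      refine le_antisymm
        ((Finset.fold_max_le _).mpr ⟨le_of_eq (hshift a haD), fun k hk => le_of_eq (hshift k hk)⟩) ?_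
      exact (Finset.le_fold_max _).mpr (Or.inl (le_of_eq (hshift a haD).symm))
    have hR : evChi χ a b t = -1 := by
      unfold evChi
      refine le_antisymm
        ((Finset.fold_max_le _).mpr ⟨le_of_eq (hall a haD), fun k hk => le_of_eq (hall k hk)⟩) ?_
      exact (Finset.le_fold_max _).mpr (Or.inl (le_of_eq (hall a haD).symm))
    rw [hL, hR]
end

section
/- For the always operator over predicates: let θ_{G_I p}(x,t) := min_{t' ∈ t+I} θ_p(x,t') and χ_{G_I p}(x,t) := min_{t' ∈ t+I} χ_p(x,t') with I a nonempty finite interval of ℕ. If θ_{G_I p}(x,t) > 0 then χ_{G_I p}(x,t) = 1, and if θ_{G_I p}(x,t) < 0 then χ_{G_I p}(x,t) = -1. -/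
/-- `min_{t' ∈ t + [a,b]} θ_p(x, t')`. -/
noncomputable def alTheta (χ : ℤ → ℤ) (a b : ℕ) (t : ℤ) : ℤ :=
  (Finset.Icc a b).fold min (thetaSym χ (t + (a : ℤ))) (fun k : ℕ => thetaSym χ (t + (k : ℤ)))

/-- `min_{t' ∈ t + [a,b]} χ_p(x, t')`. -/
def alChi (χ : ℤ → ℤ) (a b : ℕ) (t : ℤ) : ℤ :=
  (Finset.Icc a b).fold min (χ (t + (a : ℤ))) (fun k : ℕ => χ (t + (k : ℤ)))

theorem soundness_always (χ : ℤ → ℤ) (a b : ℕ) (hab : a ≤ b) (t : ℤ)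
    (hval : ∀ s : ℤ, χ s = 1 ∨ χ s = -1)
    (hfin : ∀ s : ℤ, BddAbove (symSet χ s)) :
    (alTheta χ a b t > 0 → alChi χ a b t = 1) ∧
    (alTheta χ a b t < 0 → alChi χ a b t = -1) := by
  have hpos : ∀ s : ℤ, 0 < thetaSym χ s → χ s = 1 := by
    intro s hs
    rcases hval s with h | h
    · exact h
    · exfalso
      have : thetaSym χ s ≤ 0 := by
        unfold thetaSym
        rw [h]
        have : (0 : ℤ) ≤ ((sSup (symSet χ s) : ℕ) : ℤ) := Int.natCast_nonneg _
        linarith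
      linarith
  have hneg : ∀ s : ℤ, thetaSym χ s < 0 → χ s = -1 := by
    intro s hs
    rcases hval s with h | h
    · exfalso
      have : 0 ≤ thetaSym χ s := by
        unfold thetaSym
        rw [h]
        have : (0 : ℤ) ≤ ((sSup (symSet χ s) : ℕ) : ℤ) := Int.natCast_nonneg _
        linarith
      linarith
    · exact h
  have hge : ∀ s : ℤ, -1 ≤ χ s := by
    intro s; rcases hval s with h | h <;> omega
  constructor
  · intro h
    have hnle : ¬ alTheta χ a b t ≤ 0 := by linarith
    unfold alTheta at hnle
    rw [Finset.fold_min_le] at hnle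
    push_neg at hnle
    have hall : ∀ k ∈ Finset.Icc a b, χ (t + (k : ℤ)) = 1 := fun k hk =>
      hpos _ (hnle.2 k hk)
    have ha1 : χ (t + (a : ℤ)) = 1 := hpos _ hnle.1
    have h1 : (1 : ℤ) ≤ alChi χ a b t := by
      unfold alChi
      rw [Finset.le_fold_min]
      exact ⟨ha1.ge, fun k hk => (hall k hk).ge⟩
    have h2 : alChi χ a b t ≤ 1 := by
      unfold alChi
      rw [Finset.fold_min_le]
      exact Or.inl ha1.le
    omega
  · intro h
    have hle : alTheta χ a b t ≤ -1 := by omega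
    unfold alTheta at h
    have h' : (Finset.Icc a b).fold min (thetaSym χ (t + (a : ℤ)))
        (fun k : ℕ => thetaSym χ (t + (k : ℤ))) ≤ -1 := by omega
    rw [Finset.fold_min_le] at h'
    have h2 : alChi χ a b t ≤ -1 := by
      unfold alChi
      rw [Finset.fold_min_le]
      rcases h' with h' | ⟨k, hk, hk'⟩
      · exact Or.inl (hneg _ (by omega)).le
      · exact Or.inr ⟨k, hk, (hneg _ (by omega)).le⟩
    have h1 : (-1 : ℤ) ≤ alChi χ a b t := by
      unfold alChi
      rw [Finset.le_fold_min]
      exact ⟨hge _, fun k _ => hge _⟩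
    omega
end

section
/- Signed monotonicity: if two signals agree on a window around t, their predicate temporal robustness agrees there; precisely, if χ_p(x,s) = χ_p(y,s) for all s with |s − t| ≤ R, and |θ_p(x,t)| < R, then θ_p(x,t) = θ_p(y,t). -/
theorem theta_local (χx χy : ℤ → ℤ) (t : ℤ) (R : ℕ)
    (hvalx : ∀ s : ℤ, χx s = 1 ∨ χx s = -1)
    (hvaly : ∀ s : ℤ, χy s = 1 ∨ χy s = -1)
    (hfinx : BddAbove (symSet χx t))
    (hfiny : BddAbove (symSet χy t))
    (hagree : ∀ s : ℤ, |s - t| ≤ (R : ℤ) → χx s = χy s)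
    (hR : |thetaSym χx t| < (R : ℤ)) :
    thetaSym χx t = thetaSym χy t := by
  set Nx := sSup (symSet χx t) with hNx
  set Ny := sSup (symSet χy t) with hNy
  have habs : |χx t| = 1 := by rcases hvalx t with h | h <;> simp [h]
  have habsθ : |thetaSym χx t| = (Nx : ℤ) := by
    rw [thetaSym, abs_mul, habs, one_mul, Nat.abs_cast]
  have hNxR : (Nx : ℤ) < (R : ℤ) := habsθ ▸ hR
  have hNxR' : Nx < R := by exact_mod_cast hNxR
  have hRpos : (0 : ℤ) ≤ (R : ℤ) := by positivity
  have hχt : χx t = χy t := hagree t (by simpa using hRpos)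
  have hzx : (0 : ℕ) ∈ symSet χx t := by
    intro s hs
    have hst : s = t := by rw [abs_le] at hs; omega
    rw [hst]
  have hzy : (0 : ℕ) ∈ symSet χy t := by
    intro s hs
    have hst : s = t := by rw [abs_le] at hs; omega
    rw [hst]
  have hnex : (symSet χx t).Nonempty := ⟨0, hzx⟩
  have hney : (symSet χy t).Nonempty := ⟨0, hzy⟩
  -- Nx ∈ symSet χx t
  have hmemx : Nx ∈ symSet χx t := Nat.sSup_mem hnex hfinx
  have hmemy : Ny ∈ symSet χy t := Nat.sSup_mem hney hfiny
  -- Nx ∈ symSet χy t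
  have hxy : Nx ∈ symSet χy t := by
    intro s hs
    have h1 : |s - t| ≤ (R : ℤ) := le_trans hs (le_of_lt hNxR)
    rw [← hagree s h1, ← hχt]
    exact hmemx s hs
  have hle1 : Nx ≤ Ny := le_csSup hfiny hxy
  -- Ny ≤ Nx : otherwise Nx+1 ∈ symSet χy t hence ∈ symSet χx t
  have hle2 : Ny ≤ Nx := by
    by_contra h
    push_neg at h
    have hmem1 : (Nx + 1 : ℕ) ∈ symSet χx t := by
      intro s hs
      have hsy : |s - t| ≤ (Ny : ℤ) := le_trans hs (by exact_mod_cast h)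
      have hsR : |s - t| ≤ (R : ℤ) := le_trans hs (by exact_mod_cast hNxR')
      rw [hagree s hsR, hχt]
      exact hmemy s hsy
    have := le_csSup hfinx hmem1
    omega
  have hNN : Nx = Ny := le_antisymm hle1 hle2
  rw [thetaSym, thetaSym, ← hNx, ← hNy, hNN, hχt]
end
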